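/- arXiv:1002.0387 — 2 statements merged into one kernel-verified Lean document; each statement's English description precedes it below -/
import Mathlib

section
/- Let U₁(z,·), U₂(z,·), V₁(z,·), V₂(z,·) be ℂ^{m×m}-valued sequences on ℤ satisfying, for a fixed z ∈ ℂ \ {0} and all k ∈ ℤ, the recursion (Uⱼ(z,k); Vⱼ(z,k)) = T(z,k)(Uⱼ(z,k-1); Vⱼ(z,k-1)), j = 1,2, where T(z,k) is the CMV transfer matrix built from Verblunsky coefficients αₖ with ‖αₖ‖ < 1. Then the Wronskian W(k) = ((-1)^{k+1}/2)[U₁(1/z̄,k)* U₂(z,k) - V₁(1/z̄,k)* V₂(z,k)] is independent of k. -/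
/-
With `J = diag(I, -I)`, every transfer matrix is `J`-anti-unitary across the pair of
spectral parameters: `T(1/z̄,k)* J T(z,k) = -J`. Hence `Φ₁(k)* J Φ₂(k)`, which is the bracket
in the Wronskian for `Φⱼ = (Uⱼ; Vⱼ)`, changes sign at every step, and the factor `(-1)^(k+1)`
compensates. The even transfer matrix is the odd one built from `αₖ*` at `z = 1`, so a
single block computation covers both parities; it rests on the intertwining relation
`(I - αα*)⁻¹ α = α (I - α*α)⁻¹`.
-/

open Matrix
open scoped Matrix.Norms.L2Operator ComplexOrder

noncomputable def Matrix.PosSemidef.sqrt {n 𝕜 : Type*} [Fintype n] [RCLike 𝕜] [DecidableEq n]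
    {A : Matrix n n 𝕜} (hA : A.PosSemidef) : Matrix n n 𝕜 :=
  hA.1.eigenvectorUnitary.1 * diagonal ((↑) ∘ (√·) ∘ hA.1.eigenvalues) *
  (star hA.1.eigenvectorUnitary : Matrix n n 𝕜)

/-- The CMV transfer matrix `T(z,k)`: the 'odd' form for `k` odd and the 'even' form
for `k` even, built from Verblunsky coefficients `α k` with `ρ k = (I - (α k)* α k)^{1/2}`,
`ρ̃ k = (I - α k (α k)*)^{1/2}`. -/
noncomputable def cmvTransfer {m : ℕ} (α : ℤ → Matrix (Fin m) (Fin m) ℂ)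
    (h1 : ∀ k, (1 - (α k)ᴴ * α k).PosSemidef) (h2 : ∀ k, (1 - α k * (α k)ᴴ).PosSemidef)
    (z : ℂ) (k : ℤ) : Matrix (Fin m ⊕ Fin m) (Fin m ⊕ Fin m) ℂ :=
  if Odd k then
    Matrix.fromBlocks ((h2 k).sqrt⁻¹ * α k) (z • (h2 k).sqrt⁻¹)
      (z⁻¹ • (h1 k).sqrt⁻¹) ((h1 k).sqrt⁻¹ * (α k)ᴴ)
  else
    Matrix.fromBlocks ((h1 k).sqrt⁻¹ * (α k)ᴴ) ((h1 k).sqrt⁻¹)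
      ((h2 k).sqrt⁻¹) ((h2 k).sqrt⁻¹ * α k)

namespace Matrix

variable {n 𝕜 : Type*} [Fintype n] [DecidableEq n] [RCLike 𝕜]

theorem PosSemidef.sqrt_mul_self {A : Matrix n n 𝕜} (hA : A.PosSemidef) :
    hA.sqrt * hA.sqrt = A := by
  conv_rhs => rw [hA.1.spectral_theorem, Unitary.conjStarAlgAut_apply]
  have hU : (star hA.1.eigenvectorUnitary : Matrix n n 𝕜) * hA.1.eigenvectorUnitary.1 = 1 :=
    Unitary.coe_star_mul_self _
  simp only [PosSemidef.sqrt, Matrix.mul_assoc]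
  rw [← Matrix.mul_assoc _ hA.1.eigenvectorUnitary.1, hU, Matrix.one_mul,
    ← Matrix.mul_assoc (diagonal _), diagonal_mul_diagonal]
  congr 3
  funext i
  simp only [Function.comp_apply, ← RCLike.ofReal_mul,
    Real.mul_self_sqrt (hA.eigenvalues_nonneg i)]

theorem PosSemidef.isHermitian_sqrt {A : Matrix n n 𝕜} (hA : A.PosSemidef) :
    hA.sqrt.IsHermitian := by
  rw [IsHermitian, ← star_eq_conjTranspose]
  simp only [PosSemidef.sqrt, star_mul, star_star, Matrix.mul_assoc]
  congr 2
  rw [star_eq_conjTranspose, diagonal_conjTranspose]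
  congr 1
  funext i
  simp

theorem PosSemidef.sqrt_inv_mul_self {A : Matrix n n 𝕜} (hA : A.PosSemidef) :
    hA.sqrt⁻¹ * hA.sqrt⁻¹ = A⁻¹ := by
  rw [← Matrix.mul_inv_rev, hA.sqrt_mul_self]

theorem isUnit_one_sub_conjTranspose_mul_self {a : Matrix n n 𝕜} (ha : ‖a‖ < 1) :
    IsUnit (1 - aᴴ * a) := by
  have h : ‖aᴴ * a‖ < 1 := by
    rw [l2_opNorm_conjTranspose_mul_self]
    nlinarith [norm_nonneg a]
  exact (Units.oneSub _ h).isUnit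

theorem isUnit_one_sub_mul_conjTranspose_self {a : Matrix n n 𝕜} (ha : ‖a‖ < 1) :
    IsUnit (1 - a * aᴴ) := by
  simpa using isUnit_one_sub_conjTranspose_mul_self (a := aᴴ) (by rwa [l2_opNorm_conjTranspose])

end Matrix

theorem mul_eq_mul_of_mul_one_sub_eq_one {R : Type*} [Ring R] {a b P Q : R}
    (hP : P * (1 - a * b) = 1) (hQ : (1 - b * a) * Q = 1) : P * a = a * Q :=
  calc P * a = P * (a * ((1 - b * a) * Q)) := by rw [hQ, mul_one]
    _ = P * ((1 - a * b) * a) * Q := by noncomm_ring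
    _ = a * Q := by rw [← mul_assoc P, hP, one_mul]

def signatureMatrix (n R : Type*) [DecidableEq n] [Ring R] : Matrix (n ⊕ n) (n ⊕ n) R :=
  fromBlocks 1 0 0 (-1)

section

variable {n : Type*} [Fintype n] [DecidableEq n]

noncomputable def cmvBlock (a p q : Matrix n n ℂ) (z : ℂ) : Matrix (n ⊕ n) (n ⊕ n) ℂ :=
  fromBlocks (p * a) (z • p) (z⁻¹ • q) (q * aᴴ)

theorem cmvBlock_conjTranspose_mul_signatureMatrix_mul {a p q : Matrix n n ℂ} {w z : ℂ}
    (hwz : star w * z = 1) (hp : p.IsHermitian) (hq : q.IsHermitian)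
    (hpp : p * p = (1 - a * aᴴ)⁻¹) (hqq : q * q = (1 - aᴴ * a)⁻¹)
    (hP : IsUnit (1 - a * aᴴ).det) (hQ : IsUnit (1 - aᴴ * a).det) :
    (cmvBlock a p q w)ᴴ * signatureMatrix n ℂ * cmvBlock a p q z = -signatureMatrix n ℂ := by
  set P := (1 - a * aᴴ)⁻¹
  set Q := (1 - aᴴ * a)⁻¹
  have hPa : P * a = a * Q :=
    mul_eq_mul_of_mul_one_sub_eq_one (nonsing_inv_mul _ hP) (mul_nonsing_inv _ hQ)
  have hQa : Q * aᴴ = aᴴ * P := by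
    refine mul_eq_mul_of_mul_one_sub_eq_one (nonsing_inv_mul _ hQ) ?_
    simpa using mul_nonsing_inv _ hP
  have hP1 : P - a * aᴴ * P = 1 := by simpa [sub_mul] using mul_nonsing_inv _ hP
  have hQ1 : Q - aᴴ * a * Q = 1 := by simpa [sub_mul] using mul_nonsing_inv _ hQ
  have hz : z ≠ 0 := right_ne_zero_of_mul_eq_one hwz
  have hw : star w = z⁻¹ := eq_inv_of_mul_eq_one_left hwz
  simp only [cmvBlock, signatureMatrix, fromBlocks_conjTranspose, fromBlocks_multiply,
    fromBlocks_neg, conjTranspose_mul, conjTranspose_smul, conjTranspose_conjTranspose, hp.eq,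
    hq.eq, star_inv₀, hw, inv_inv, mul_one, mul_zero, add_zero, zero_add,
    mul_neg, neg_mul, neg_zero, neg_neg, smul_mul_assoc, mul_smul_comm, smul_neg, smul_smul,
    mul_assoc]
  simp only [← mul_assoc p p, ← mul_assoc q q, hpp, hqq, mul_inv_cancel₀ hz,
    inv_mul_cancel₀ hz, one_smul]
  congr 1
  · rw [hPa, ← hQ1]; noncomm_ring
  · rw [← hQa, add_neg_cancel]
  · rw [hPa, add_neg_cancel]
  · rw [hQa, ← hP1]; noncomm_ring

theorem fromRows_conjTranspose_mul_signatureMatrix_mul_fromRows {R l : Type*} [Ring R]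
    [StarRing R] (U₁ V₁ U₂ V₂ : Matrix n l R) :
    (fromRows U₁ V₁)ᴴ * signatureMatrix n R * fromRows U₂ V₂ = U₁ᴴ * U₂ - V₁ᴴ * V₂ := by
  simp [signatureMatrix, conjTranspose_fromRows_eq_fromCols_conjTranspose,
    fromCols_mul_fromBlocks, fromCols_mul_fromRows, sub_eq_add_neg]

end

theorem cmvTransfer_eq_cmvBlock {m : ℕ} (α : ℤ → Matrix (Fin m) (Fin m) ℂ)
    (h1 : ∀ k, (1 - (α k)ᴴ * α k).PosSemidef) (h2 : ∀ k, (1 - α k * (α k)ᴴ).PosSemidef)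
    (z : ℂ) (k : ℤ) :
    cmvTransfer α h1 h2 z k = if Odd k then cmvBlock (α k) (h2 k).sqrt⁻¹ (h1 k).sqrt⁻¹ z
      else cmvBlock (α k)ᴴ (h1 k).sqrt⁻¹ (h2 k).sqrt⁻¹ 1 := by
  unfold cmvTransfer cmvBlock
  split_ifs <;> simp

theorem cmvTransfer_conjTranspose_mul_signatureMatrix_mul {m : ℕ}
    {α : ℤ → Matrix (Fin m) (Fin m) ℂ} (h1 : ∀ k, (1 - (α k)ᴴ * α k).PosSemidef)
    (h2 : ∀ k, (1 - α k * (α k)ᴴ).PosSemidef) {k : ℤ} (hα : ‖α k‖ < 1) {z : ℂ} (hz : z ≠ 0) :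
    (cmvTransfer α h1 h2 (starRingEnd ℂ z)⁻¹ k)ᴴ * signatureMatrix (Fin m) ℂ
      * cmvTransfer α h1 h2 z k = -signatureMatrix (Fin m) ℂ := by
  have hρ := (isUnit_iff_isUnit_det _).mp (isUnit_one_sub_conjTranspose_mul_self hα)
  have hρ' := (isUnit_iff_isUnit_det _).mp (isUnit_one_sub_mul_conjTranspose_self hα)
  rw [cmvTransfer_eq_cmvBlock, cmvTransfer_eq_cmvBlock]
  split_ifs
  · exact cmvBlock_conjTranspose_mul_signatureMatrix_mul (by simp [hz])
      (h2 k).isHermitian_sqrt.inv (h1 k).isHermitian_sqrt.inv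
      (h2 k).sqrt_inv_mul_self (h1 k).sqrt_inv_mul_self hρ' hρ
  · exact cmvBlock_conjTranspose_mul_signatureMatrix_mul (by simp)
      (h1 k).isHermitian_sqrt.inv (h2 k).isHermitian_sqrt.inv
      (by simpa using (h1 k).sqrt_inv_mul_self) (by simpa using (h2 k).sqrt_inv_mul_self)
      (by simpa using hρ) (by simpa using hρ')

theorem neg_one_zpow_smul_eq_of_eq_neg {R M : Type*} [DivisionRing R] [AddCommGroup M]
    [Module R M] {f : ℤ → M} (hf : ∀ k, f k = -f (k - 1)) (k : ℤ) :
    (-1 : R) ^ k • f k = f 0 := by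
  have h1 : (-1 : R) ≠ 0 := by norm_num
  induction k using Int.induction_on with
  | zero => simp
  | succ i ih => rw [hf, add_sub_cancel_right, zpow_add_one₀ h1, smul_neg, mul_smul,
      ← smul_neg, neg_one_smul, neg_neg, ih]
  | pred i ih => rw [← ih, hf (-(i : ℤ)), zpow_sub_one₀ h1, mul_smul, inv_neg_one, neg_one_smul,
      smul_neg]

/-- if `(U₁,V₁)` satisfies the CMV transfer recursion at `1/z̄` and `(U₂,V₂)`
satisfies it at `z`, then the Wronskian
`W(k) = ((-1)^(k+1)/2)[U₁(1/z̄,k)* U₂(z,k) - V₁(1/z̄,k)* V₂(z,k)]` is independent of `k`. -/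
theorem stmt5 {m : ℕ} (α : ℤ → Matrix (Fin m) (Fin m) ℂ) (hα : ∀ k, ‖α k‖ < 1)
    (h1 : ∀ k, (1 - (α k)ᴴ * α k).PosSemidef) (h2 : ∀ k, (1 - α k * (α k)ᴴ).PosSemidef)
    (z : ℂ) (hz : z ≠ 0)
    (U₁ V₁ U₂ V₂ : ℤ → Matrix (Fin m) (Fin m) ℂ)
    (hrec1 : ∀ k : ℤ, Matrix.fromRows (U₁ k) (V₁ k)
      = cmvTransfer α h1 h2 ((starRingEnd ℂ z)⁻¹) k * Matrix.fromRows (U₁ (k - 1)) (V₁ (k - 1)))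
    (hrec2 : ∀ k : ℤ, Matrix.fromRows (U₂ k) (V₂ k)
      = cmvTransfer α h1 h2 z k * Matrix.fromRows (U₂ (k - 1)) (V₂ (k - 1))) :
    ∀ k k' : ℤ,
      ((-1 : ℂ) ^ (k + 1) / 2) • ((U₁ k)ᴴ * U₂ k - (V₁ k)ᴴ * V₂ k)
        = ((-1 : ℂ) ^ (k' + 1) / 2) • ((U₁ k')ᴴ * U₂ k' - (V₁ k')ᴴ * V₂ k') := by
  intro k k'
  set G : ℤ → Matrix (Fin m) (Fin m) ℂ := fun k =>
    (fromRows (U₁ k) (V₁ k))ᴴ * signatureMatrix (Fin m) ℂ * fromRows (U₂ k) (V₂ k)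
  have hG : ∀ k, G k = -G (k - 1) := fun k => by
    calc G k = (fromRows (U₁ (k - 1)) (V₁ (k - 1)))ᴴ
          * ((cmvTransfer α h1 h2 (starRingEnd ℂ z)⁻¹ k)ᴴ * signatureMatrix (Fin m) ℂ
            * cmvTransfer α h1 h2 z k) * fromRows (U₂ (k - 1)) (V₂ (k - 1)) := by
          simp only [G, hrec1 k, hrec2 k, conjTranspose_mul, Matrix.mul_assoc]
      _ = -G (k - 1) := by
          rw [cmvTransfer_conjTranspose_mul_signatureMatrix_mul h1 h2 (hα k) hz]
          simp only [G, Matrix.mul_neg, Matrix.neg_mul]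
  have hW : ∀ k, ((-1 : ℂ) ^ (k + 1) / 2) • ((U₁ k)ᴴ * U₂ k - (V₁ k)ᴴ * V₂ k)
      = (-1 / 2 : ℂ) • G 0 := fun k => by
    rw [← fromRows_conjTranspose_mul_signatureMatrix_mul_fromRows,
      ← neg_one_zpow_smul_eq_of_eq_neg (R := ℂ) hG k, smul_smul, zpow_add_one₀ (by norm_num)]
    congr 1
    ring
  rw [hW, hW]
end

section
/- Let α be an m×m complex matrix with ‖α‖ < 1. Then α(I - α*α)^{-1/2} = (I - αα*)^{-1/2} α, and consequently ρ = (I + [g h^{-1}]*[g h^{-1}])^{-1/2} satisfies α = (g h^{-1}) ρ where g h^{-1} = αρ^{-1}; i.e., the map α ↦ αρ^{-1} = α(I-α*α)^{-1/2} from the open unit norm ball of ℂ^{m×m} to ℂ^{m×m} is injective with explicit inverse β ↦ β(I+β*β)^{-1/2}. -/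
open Matrix
open scoped Matrix.Norms.L2Operator ComplexOrder

/-!
By the C⋆-identity `‖α‖² = ‖α⋆α‖`, the bound `‖α‖ < 1` says exactly that `1 - α⋆α` is positive
definite. The push-through identity `α (1 - α⋆α) = (1 - αα⋆) α` survives inversion and, because
on matrices every continuous functional calculus is a polynomial one, also square roots. For an
invertible Hermitian `s`, the relation `α⋆α + s² = 1` is equivalent to `1 + β⋆β = s⁻²` with
`β = α s⁻¹`; with uniqueness of positive square roots this makes `α ↦ α (1 - α⋆α)^{-1/2}` and
`β ↦ β (1 + β⋆β)^{-1/2}` mutually inverse.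
-/

open Polynomial
open scoped MatrixOrder

theorem SemiconjBy.aeval {R A : Type*} [CommSemiring R] [Semiring A] [Algebra R A] {x a b : A}
    (h : SemiconjBy x a b) (p : R[X]) : SemiconjBy x (aeval a p) (aeval b p) := by
  induction p using Polynomial.induction_on' with
  | add p q hp hq => simpa only [map_add] using hp.add_right hq
  | monomial k r =>
    simpa only [aeval_monomial] using
      (show SemiconjBy x _ _ from (Algebra.commutes r x).symm).mul_right (h.pow_right k)

theorem SemiconjBy.cfc_of_finite_spectrum {A : Type*} [Ring A] [StarRing A] [Algebra ℝ A]
    [TopologicalSpace A] [ContinuousFunctionalCalculus ℝ A IsSelfAdjoint] {x a b : A}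
    (h : SemiconjBy x a b) (ha : IsSelfAdjoint a) (hb : IsSelfAdjoint b)
    (ha' : (spectrum ℝ a).Finite) (hb' : (spectrum ℝ b).Finite) (f : ℝ → ℝ) :
    SemiconjBy x (cfc f a) (cfc f b) := by
  classical
  set s := (ha'.union hb').toFinset
  set p := Lagrange.interpolate s id f
  have hp : ∀ y ∈ s, p.eval y = f y := fun y hy =>
    Lagrange.eval_interpolate_at_node _ Function.injective_id.injOn hy
  have hpa : (spectrum ℝ a).EqOn f p.eval := fun y hy => (hp y (by simp [s, hy])).symm
  have hpb : (spectrum ℝ b).EqOn f p.eval := fun y hy => (hp y (by simp [s, hy])).symm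
  rw [cfc_congr hpa, cfc_congr hpb, cfc_polynomial p a, cfc_polynomial p b]
  exact h.aeval p

theorem CStarAlgebra.norm_lt_one_iff_isStrictlyPositive {A : Type*} [CStarAlgebra A]
    [PartialOrder A] [StarOrderedRing A] (a : A) :
    ‖a‖ < 1 ↔ IsStrictlyPositive (1 - star a * a) := by
  rcases subsingleton_or_nontrivial A with hA | hA
  · simp [Subsingleton.elim a 0, IsStrictlyPositive.of_subsingleton]
  constructor
  · intro h
    refine (isStrictlyPositive_algebraMap (𝕜 := ℝ) (c := 1 - ‖a‖ ^ 2) ?_).of_le ?_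
    · nlinarith [norm_nonneg a]
    · rw [map_sub, map_one]
      exact sub_le_sub_left CStarAlgebra.star_mul_le_algebraMap_norm_sq 1
  · intro h
    have hmem : 1 - ‖a‖ ^ 2 ∈ spectrum ℝ (1 - star a * a) := by
      rw [sq, ← CStarRing.norm_star_mul_self, ← algebraMap.coe_one (R := ℝ) (A := A),
        ← spectrum.singleton_sub_eq]
      exact Set.sub_mem_sub rfl (norm_mem_spectrum_of_nonneg (star_mul_self_nonneg a))
    nlinarith [norm_nonneg a, h.spectrum_pos hmem]

namespace Matrix

variable {n : Type*} [Fintype n] [DecidableEq n]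

theorem PosSemidef.sqrt_eq_cfcSqrt {A : Matrix n n ℂ} (hA : A.PosSemidef) :
    hA.sqrt = CFC.sqrt A := by
  rw [CFC.sqrt_eq_real_sqrt A hA.nonneg, cfcₙ_eq_cfc, hA.1.cfc_eq]
  rfl

theorem conjTranspose_mul_self_add_mul_self_eq_one_iff {R : Type*} [CommRing R] [StarRing R]
    {α s : Matrix n n R} (hs : s.IsHermitian) (hu : IsUnit s) :
    αᴴ * α + s * s = 1 ↔ 1 + (α * s⁻¹)ᴴ * (α * s⁻¹) = s⁻¹ * s⁻¹ := by
  have hu' : IsUnit s⁻¹ := isUnit_nonsing_inv_iff.mpr hu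
  have hconj : (α * s⁻¹)ᴴ * (α * s⁻¹) = s⁻¹ * (αᴴ * α) * s⁻¹ := by
    rw [conjTranspose_mul, conjTranspose_nonsing_inv, hs.eq]
    simp only [Matrix.mul_assoc]
  have hss : s⁻¹ * s * s * s⁻¹ = 1 := by
    rw [nonsing_inv_mul _ ((isUnit_iff_isUnit_det s).mp hu), Matrix.one_mul,
      mul_nonsing_inv _ ((isUnit_iff_isUnit_det s).mp hu)]
  rw [hconj, ← hu'.mul_left_inj, ← hu'.mul_right_inj]
  simp only [Matrix.mul_add, Matrix.add_mul, ← Matrix.mul_assoc]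
  rw [hss, Matrix.mul_one, add_comm]

theorem norm_lt_one_iff_posDef_one_sub (α : Matrix n n ℂ) : ‖α‖ < 1 ↔ (1 - αᴴ * α).PosDef := by
  rw [CStarAlgebra.norm_lt_one_iff_isStrictlyPositive, isStrictlyPositive_iff_posDef,
    star_eq_conjTranspose]

theorem posDef_sqrt_one_sub_of_norm_lt_one {α : Matrix n n ℂ} (h : ‖α‖ < 1) :
    (CFC.sqrt (1 - αᴴ * α)).PosDef :=
  (((norm_lt_one_iff_posDef_one_sub α).mp h).isStrictlyPositive.sqrt).posDef

theorem semiconjBy_inv_sqrt_one_sub {α : Matrix n n ℂ} (h : ‖α‖ < 1) :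
    SemiconjBy α (CFC.sqrt (1 - αᴴ * α))⁻¹ (CFC.sqrt (1 - α * αᴴ))⁻¹ := by
  have hS := (norm_lt_one_iff_posDef_one_sub α).mp h
  have hT : (1 - α * αᴴ).PosDef := by
    simpa using (norm_lt_one_iff_posDef_one_sub αᴴ).mp (by rwa [l2_opNorm_conjTranspose])
  have hST : SemiconjBy α (1 - αᴴ * α) (1 - α * αᴴ) := by
    simp only [SemiconjBy, Matrix.mul_sub, Matrix.sub_mul, Matrix.mul_one, Matrix.one_mul,
      Matrix.mul_assoc]
  have hST' : SemiconjBy α (1 - αᴴ * α)⁻¹ (1 - α * αᴴ)⁻¹ := by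
    simpa using Matrix.SemiconjBy.zpow_right ((isUnit_iff_isUnit_det _).mp hS.isUnit)
      ((isUnit_iff_isUnit_det _).mp hT.isUnit) hST (-1)
  rw [hS.posSemidef.inv_sqrt, hT.posSemidef.inv_sqrt,
    CFC.sqrt_eq_real_sqrt _ hS.inv.posSemidef.nonneg,
    CFC.sqrt_eq_real_sqrt _ hT.inv.posSemidef.nonneg, cfcₙ_eq_cfc, cfcₙ_eq_cfc]
  exact hST'.cfc_of_finite_spectrum hS.inv.isHermitian hT.inv.isHermitian finite_real_spectrum
    finite_real_spectrum _

theorem eq_mul_inv_sqrt_one_add_of_norm_lt_one {α β : Matrix n n ℂ} (h : ‖α‖ < 1)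
    (hβ : α * (CFC.sqrt (1 - αᴴ * α))⁻¹ = β) : α = β * (CFC.sqrt (1 + βᴴ * β))⁻¹ := by
  set s := CFC.sqrt (1 - αᴴ * α)
  have hs : s.PosDef := posDef_sqrt_one_sub_of_norm_lt_one h
  have hsu : IsUnit s.det := (isUnit_iff_isUnit_det s).mp hs.isUnit
  have hss : αᴴ * α + s * s = 1 := by
    rw [CFC.sqrt_mul_sqrt_self _ ((norm_lt_one_iff_posDef_one_sub α).mp h).posSemidef.nonneg,
      add_sub_cancel]
  have hββ : 1 + βᴴ * β = s⁻¹ * s⁻¹ := by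
    rw [← hβ]
    exact (conjTranspose_mul_self_add_mul_self_eq_one_iff hs.isHermitian hs.isUnit).mp hss
  rw [hββ, CFC.sqrt_mul_self _ hs.inv.posSemidef.nonneg, ← hβ, nonsing_inv_nonsing_inv _ hsu,
    Matrix.mul_assoc, nonsing_inv_mul _ hsu, Matrix.mul_one]

theorem norm_lt_one_and_mul_inv_sqrt_one_sub_eq {α β : Matrix n n ℂ}
    (hα : β * (CFC.sqrt (1 + βᴴ * β))⁻¹ = α) :
    ‖α‖ < 1 ∧ α * (CFC.sqrt (1 - αᴴ * α))⁻¹ = β := by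
  set r := CFC.sqrt (1 + βᴴ * β)
  have hpos : (1 + βᴴ * β).PosDef :=
    PosDef.one.add_posSemidef (posSemidef_conjTranspose_mul_self β)
  have hr : r.PosDef := hpos.isStrictlyPositive.sqrt.posDef
  have hru : IsUnit r.det := (isUnit_iff_isUnit_det r).mp hr.isUnit
  have hrr : 1 + (α * r⁻¹⁻¹)ᴴ * (α * r⁻¹⁻¹) = r⁻¹⁻¹ * r⁻¹⁻¹ := by
    rw [nonsing_inv_nonsing_inv _ hru, ← hα, Matrix.mul_assoc, nonsing_inv_mul _ hru,
      Matrix.mul_one, CFC.sqrt_mul_sqrt_self _ hpos.posSemidef.nonneg]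
  have hαα : 1 - αᴴ * α = r⁻¹ * r⁻¹ := by
    rw [← (conjTranspose_mul_self_add_mul_self_eq_one_iff hr.inv.isHermitian
      hr.inv.isUnit).mpr hrr, add_sub_cancel_left]
  have hr' : 0 ≤ r⁻¹ := hr.inv.posSemidef.nonneg
  constructor
  · have hsq : 0 ≤ r⁻¹ * r⁻¹ := by
      simpa only [hr'.isSelfAdjoint.star_eq] using star_mul_self_nonneg r⁻¹
    rw [norm_lt_one_iff_posDef_one_sub, hαα]
    exact ((hr.inv.isUnit.mul hr.inv.isUnit).isStrictlyPositive hsq).posDef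
  · rw [hαα, CFC.sqrt_mul_self _ hr', nonsing_inv_nonsing_inv _ hru, ← hα, Matrix.mul_assoc,
      nonsing_inv_mul _ hru, Matrix.mul_one]

end Matrix

/-- For `‖α‖ < 1` one has `α(I-α*α)^{-1/2} = (I-αα*)^{-1/2}α`, and the map
`α ↦ α(I-α*α)^{-1/2}` from the open unit operator-norm ball of `ℂ^{m×m}` to `ℂ^{m×m}` is a
bijection with explicit inverse `β ↦ β(I+β*β)^{-1/2}`: for every `β` there is a unique `α`
with `‖α‖ < 1` and `α(I-α*α)^{-1/2} = β`, and this `α` equals `β(I+β*β)^{-1/2}`. -/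
theorem stmt17 {m : ℕ} :
    (∀ (α : Matrix (Fin m) (Fin m) ℂ), ‖α‖ < 1 →
      ∀ (h1 : (1 - αᴴ * α).PosSemidef) (h2 : (1 - α * αᴴ).PosSemidef),
        α * h1.sqrt⁻¹ = h2.sqrt⁻¹ * α) ∧
    (∀ (β : Matrix (Fin m) (Fin m) ℂ) (h3 : (1 + βᴴ * β).PosSemidef),
      (∃! α : Matrix (Fin m) (Fin m) ℂ, ‖α‖ < 1 ∧
        ∃ h1 : (1 - αᴴ * α).PosSemidef, α * h1.sqrt⁻¹ = β) ∧
      ‖β * h3.sqrt⁻¹‖ < 1 ∧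
      ∃ h1 : (1 - (β * h3.sqrt⁻¹)ᴴ * (β * h3.sqrt⁻¹)).PosSemidef,
        (β * h3.sqrt⁻¹) * h1.sqrt⁻¹ = β) := by
  refine ⟨fun α hα h1 h2 => ?_, fun β h3 => ?_⟩
  · rw [h1.sqrt_eq_cfcSqrt, h2.sqrt_eq_cfcSqrt]
    exact semiconjBy_inv_sqrt_one_sub hα
  obtain ⟨hnorm, hβ⟩ := norm_lt_one_and_mul_inv_sqrt_one_sub_eq (α := β * h3.sqrt⁻¹)
    (by rw [h3.sqrt_eq_cfcSqrt])
  have h1 := ((norm_lt_one_iff_posDef_one_sub _).mp hnorm).posSemidef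
  have hβ' : β * h3.sqrt⁻¹ * h1.sqrt⁻¹ = β := by rwa [h1.sqrt_eq_cfcSqrt]
  refine ⟨⟨_, ⟨hnorm, h1, hβ'⟩, ?_⟩, hnorm, h1, hβ'⟩
  rintro α ⟨hα, h1', hαβ⟩
  rw [h3.sqrt_eq_cfcSqrt]
  exact eq_mul_inv_sqrt_one_add_of_norm_lt_one hα (by rwa [← h1'.sqrt_eq_cfcSqrt])
end
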